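/- arXiv:math/0503053 — 3 statements merged into one kernel-verified Lean document; each statement's English description precedes it below -/
import Mathlib

section
/- Let (A,ψ) be an O-deformation of a and I_A = ker(m_A : A ⊗_k A → A). Let N := I_A/(T*·I_A + I_A·T*) be the reduction of I_A modulo T* on both sides (T* acting through the first tensor factor on the left and through the second tensor factor on the right); N is an a-bimodule. Then the following sequence of a-bimodules is exact: 0 → a ⊗ T* →^ν N →^u a ⊗_k a →^{m_a} a → 0, where: m_a is the multiplication map of a; u is induced by the inclusion I_A ⊆ A ⊗_k A followed by the two-sided reduction A ⊗_k A → a ⊗_k a; and ν sends y ⊗ t (y ∈ a, t ∈ T*) to the class in N of the element (t·x) ⊗ 1 − 1 ⊗ (x·t) ∈ I_A, where x ∈ A is any lift of y under ψ. -/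
/-!
Work in `B ⊗ B` modulo `K = T*·I + I·T*`. The elements of `T*` are central and square-zero in
`B` and generate `ker ψ`, so `ker (ψ ⊗ ψ)` is spanned by the tensors `(t x) ⊗ b` and `b ⊗ (x t)`.
Modulo `K` these are congruent to `(t x b) ⊗ 1` and `1 ⊗ (b x t)`, and `j ⊗ 1 - 1 ⊗ j` is a value
of `ν` whenever `ψ j = 0`. Hence an element of `I ∩ ker (ψ ⊗ ψ)` is congruent modulo `K + im ν`
to some `j ⊗ 1`, and applying the multiplication gives `j = 0`.

For the injectivity of `ν` modulo `K`, freeness of `B` over `O` provides a `k`-linear map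
`ℓ : B → a ⊗ T*` with `ℓ (t b) = ψ b ⊗ t`; then `b ⊗ c ↦ ℓ b · ψ c` vanishes on `K` and is a left
inverse of `ν`. Exactness at `a ⊗ a` follows by lifting along the surjection `ψ ⊗ ψ` and
correcting by `1 ⊗ m w`.
-/

open scoped TensorProduct

namespace TrivSqZeroExt

variable {R M B N : Type*} [CommRing R] [AddCommGroup M] [Module R M] [Module Rᵐᵒᵖ M]
  [IsCentralScalar R M] [AddCommGroup B] [Module R B] [Module (TrivSqZeroExt R M) B]
  [IsScalarTower R (TrivSqZeroExt R M) B] [AddCommGroup N] [Module R N]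

theorem map_smul_of_map_inr_smul_eq_zero (f : B →ₗ[R] N)
    (hf : ∀ (m : M) (b : B), f ((inr m : TrivSqZeroExt R M) • b) = 0)
    (o : TrivSqZeroExt R M) (b : B) : f (o • b) = o.fst • f b := by
  conv_lhs => rw [← inl_fst_add_inr_snd_eq o, add_smul, ← algebraMap_eq_inl,
    algebraMap_smul, map_add, hf, add_zero, map_smul]

theorem exists_linearMap_inr_smul [Module.Free (TrivSqZeroExt R M) B] (f : B →ₗ[R] N)
    (hf : ∀ (m : M) (b : B), f ((inr m : TrivSqZeroExt R M) • b) = 0) :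
    ∃ ℓ : B →ₗ[R] N ⊗[R] M,
      ∀ (m : M) (b : B), ℓ ((inr m : TrivSqZeroExt R M) • b) = f b ⊗ₜ m := by
  let e := Module.Free.chooseBasis (TrivSqZeroExt R M) B
  refine ⟨Finsupp.lsum R (fun s => TensorProduct.mk R N M (f (e s)) ∘ₗ sndHom R M) ∘ₗ
    (e.repr.restrictScalars R).toLinearMap, fun m b => ?_⟩
  have hF s (o : TrivSqZeroExt R M) : (TensorProduct.mk R N M (f (e s)) ∘ₗ sndHom R M)
      (inr m * o) = (o.fst • f (e s)) ⊗ₜ m := by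
    simp [TensorProduct.smul_tmul']
  conv_rhs => rw [← e.linearCombination_repr b, Finsupp.linearCombination_apply]
  simp only [LinearMap.comp_apply, LinearEquiv.coe_coe, LinearEquiv.restrictScalars_apply,
    map_smul, Finsupp.lsum_apply]
  rw [Finsupp.sum_smul_index' (fun s => map_zero _)]
  simp only [smul_eq_mul, hF, Finsupp.sum, map_sum, map_smul_of_map_inr_smul_eq_zero f hf,
    TensorProduct.sum_tmul]

end TrivSqZeroExt

section MulKer

open LinearMap TensorProduct

variable {R B A : Type*} [CommRing R] [Ring B] [Algebra R B] [Ring A] [Algebra R A]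

theorem LinearMap.mul'_surjective : Function.Surjective (mul' R A) :=
  fun a => ⟨a ⊗ₜ 1, by rw [mul'_apply, mul_one]⟩

theorem LinearMap.mul'_rTensor_mulLeft (c : B) (x : B ⊗[R] B) :
    mul' R B (rTensor B (mulLeft R c) x) = c * mul' R B x := by
  induction x using TensorProduct.induction_on with
  | zero => simp
  | tmul a b => simp [mul_assoc]
  | add y z hy hz => simp only [map_add, hy, hz, mul_add]

theorem LinearMap.mul'_lTensor_mulRight (c : B) (x : B ⊗[R] B) :
    mul' R B (lTensor B (mulRight R c) x) = mul' R B x * c := by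
  induction x using TensorProduct.induction_on with
  | zero => simp
  | tmul a b => simp [mul_assoc]
  | add y z hy hz => simp only [map_add, hy, hz, add_mul]

theorem LinearMap.mul'_map_algHom (ψ : B →ₐ[R] A) (x : B ⊗[R] B) :
    mul' R A (map ψ.toLinearMap ψ.toLinearMap x) = ψ (mul' R B x) := by
  induction x using TensorProduct.induction_on with
  | zero => simp
  | tmul a b => simp
  | add y z hy hz => simp only [map_add, hy, hz]

theorem LinearMap.sub_mul'_tmul_one_mem_ker_mul' (x : B ⊗[R] B) :
    x - mul' R B x ⊗ₜ 1 ∈ ker (mul' R B) := by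
  simp

theorem LinearMap.sub_one_tmul_mul'_mem_ker_mul' (x : B ⊗[R] B) :
    x - 1 ⊗ₜ mul' R B x ∈ ker (mul' R B) := by
  simp

theorem LinearMap.ker_mul'_eq_map_ker_mul' {ψ : B →ₐ[R] A} (hψ : Function.Surjective ψ) :
    ker (mul' R A) = (ker (mul' R B)).map (map ψ.toLinearMap ψ.toLinearMap) := by
  refine le_antisymm (fun z hz => ?_) ?_
  · obtain ⟨w, rfl⟩ :=
      TensorProduct.map_surjective (g := ψ.toLinearMap) (g' := ψ.toLinearMap) hψ hψ z
    refine ⟨_, sub_one_tmul_mul'_mem_ker_mul' w, ?_⟩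
    rw [mem_ker, mul'_map_algHom] at hz
    simp [hz]
  · rintro _ ⟨x, hx, rfl⟩
    rw [mem_ker, mul'_map_algHom, mem_ker.mp hx, map_zero]

end MulKer

section TwoSidedMultiples

open LinearMap TensorProduct

variable {R B A τ : Type*} [CommRing R] [Ring B] [Algebra R B] [Ring A] [Algebra R A]

variable (R) in
/-- `T*·I + I·T*` for `I = ker (mul' R B)`, with `T*` acting on `B` through `ι`. -/
def twoSidedMultiples (ι : τ → B) : Submodule R (B ⊗[R] B) :=
  Submodule.span R {y | ∃ t, ∃ x ∈ ker (mul' R B), y = rTensor B (mulLeft R (ι t)) x} ⊔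
    Submodule.span R {y | ∃ t, ∃ x ∈ ker (mul' R B), y = lTensor B (mulRight R (ι t)) x}

theorem twoSidedMultiples_le {ι : τ → B} {P : Submodule R (B ⊗[R] B)}
    (hleft : ∀ t, ∀ x ∈ ker (mul' R B), rTensor B (mulLeft R (ι t)) x ∈ P)
    (hright : ∀ t, ∀ x ∈ ker (mul' R B), lTensor B (mulRight R (ι t)) x ∈ P) :
    twoSidedMultiples R ι ≤ P :=
  sup_le (Submodule.span_le.mpr fun _ ⟨t, x, hx, hy⟩ => hy ▸ hleft t x hx)
    (Submodule.span_le.mpr fun _ ⟨t, x, hx, hy⟩ => hy ▸ hright t x hx)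

theorem rTensor_mulLeft_mem_twoSidedMultiples (ι : τ → B) (t : τ) {x : B ⊗[R] B}
    (hx : x ∈ ker (mul' R B)) : rTensor B (mulLeft R (ι t)) x ∈ twoSidedMultiples R ι :=
  Submodule.mem_sup_left (Submodule.subset_span ⟨t, x, hx, rfl⟩)

theorem lTensor_mulRight_mem_twoSidedMultiples (ι : τ → B) (t : τ) {x : B ⊗[R] B}
    (hx : x ∈ ker (mul' R B)) : lTensor B (mulRight R (ι t)) x ∈ twoSidedMultiples R ι :=
  Submodule.mem_sup_right (Submodule.subset_span ⟨t, x, hx, rfl⟩)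

theorem twoSidedMultiples_le_ker_mul' (ι : τ → B) : twoSidedMultiples R ι ≤ ker (mul' R B) :=
  twoSidedMultiples_le (fun t x hx => by simp [mul'_rTensor_mulLeft, mem_ker.mp hx])
    (fun t x hx => by simp [mul'_lTensor_mulRight, mem_ker.mp hx])

theorem twoSidedMultiples_le_ker_map {ι : τ → B} {ψ : B →ₐ[R] A} (hψι : ∀ t, ψ (ι t) = 0) :
    twoSidedMultiples R ι ≤ ker (map ψ.toLinearMap ψ.toLinearMap) := by
  have hleft t : map ψ.toLinearMap ψ.toLinearMap ∘ₗ rTensor B (mulLeft R (ι t)) = 0 :=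
    TensorProduct.ext' fun b c => by simp [hψι]
  have hright t : map ψ.toLinearMap ψ.toLinearMap ∘ₗ lTensor B (mulRight R (ι t)) = 0 :=
    TensorProduct.ext' fun b c => by simp [hψι]
  exact twoSidedMultiples_le (fun t x _ => LinearMap.congr_fun (hleft t) x)
    (fun t x _ => LinearMap.congr_fun (hright t) x)

theorem rTensor_mulLeft_sub_mem_twoSidedMultiples (ι : τ → B) (t : τ) (x : B ⊗[R] B) :
    rTensor B (mulLeft R (ι t)) x - (ι t * mul' R B x) ⊗ₜ 1 ∈ twoSidedMultiples R ι := by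
  simpa using rTensor_mulLeft_mem_twoSidedMultiples ι t (sub_mul'_tmul_one_mem_ker_mul' x)

theorem lTensor_mulRight_sub_mem_twoSidedMultiples (ι : τ → B) (t : τ) (x : B ⊗[R] B) :
    lTensor B (mulRight R (ι t)) x - 1 ⊗ₜ (mul' R B x * ι t) ∈ twoSidedMultiples R ι := by
  simpa using lTensor_mulRight_mem_twoSidedMultiples ι t (sub_one_tmul_mul'_mem_ker_mul' x)

theorem Ideal.restrictScalars_span_range_le {ι : τ → B} (hcomm : ∀ t b, Commute (ι t) b)
    {N : Submodule R B} (hN : ∀ t b, ι t * b ∈ N) :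
    (Ideal.span (Set.range ι)).restrictScalars R ≤ N := by
  intro x hx
  obtain ⟨c, rfl⟩ := Finsupp.mem_span_range_iff_exists_finsupp.mp hx
  refine Submodule.sum_mem _ fun t _ => ?_
  simp only [smul_eq_mul]
  rw [← (hcomm t (c t)).eq]
  exact hN t (c t)

theorem mul_eq_zero_of_mem_span_range {ι : τ → B} (hcomm : ∀ t b, Commute (ι t) b)
    (hsq : ∀ t t', ι t * ι t' = 0) (t : τ) {x : B} (hx : x ∈ Ideal.span (Set.range ι)) :
    ι t * x = 0 := by
  obtain ⟨c, rfl⟩ := Finsupp.mem_span_range_iff_exists_finsupp.mp hx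
  refine Finset.mul_sum _ _ _ |>.trans (Finset.sum_eq_zero fun s _ => ?_)
  simp only [smul_eq_mul]
  rw [← mul_assoc, (hcomm t (c s)).eq, mul_assoc, hsq, mul_zero]

end TwoSidedMultiples

section Boundary

open LinearMap TensorProduct

variable {R B A M : Type*} [CommRing R] [Ring B] [Algebra R B] [Ring A] [Algebra R A]
  [AddCommGroup M] [Module R M]

theorem range_le_ker_mul'_of_boundary {ι : M → B} (hcomm : ∀ t b, Commute (ι t) b)
    {σ : A →ₗ[R] B} {ν : A ⊗[R] M →ₗ[R] B ⊗[R] B}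
    (hν : ∀ y t, ν (y ⊗ₜ t) = (ι t * σ y) ⊗ₜ 1 - 1 ⊗ₜ (σ y * ι t)) :
    range ν ≤ ker (mul' R B) :=
  range_le_ker_iff.mpr <| TensorProduct.ext' fun y t => by simp [hν, (hcomm t _).eq]

theorem range_le_ker_map_of_boundary {ι : M → B} {ψ : B →ₐ[R] A} (hψι : ∀ t, ψ (ι t) = 0)
    {σ : A →ₗ[R] B} {ν : A ⊗[R] M →ₗ[R] B ⊗[R] B}
    (hν : ∀ y t, ν (y ⊗ₜ t) = (ι t * σ y) ⊗ₜ 1 - 1 ⊗ₜ (σ y * ι t)) :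
    range ν ≤ ker (map ψ.toLinearMap ψ.toLinearMap) :=
  range_le_ker_iff.mpr <| TensorProduct.ext' fun y t => by simp [hν, hψι]

theorem mul_tmul_one_sub_one_tmul_mul_mem_range {ι : M → B} (hcomm : ∀ t b, Commute (ι t) b)
    (hsq : ∀ t t', ι t * ι t' = 0) {ψ : B →ₐ[R] A}
    (hker : ∀ x, ψ x = 0 → x ∈ Ideal.span (Set.range ι)) {σ : A →ₗ[R] B}
    (hσ : ∀ y, ψ (σ y) = y) {ν : A ⊗[R] M →ₗ[R] B ⊗[R] B}
    (hν : ∀ y t, ν (y ⊗ₜ t) = (ι t * σ y) ⊗ₜ 1 - 1 ⊗ₜ (σ y * ι t)) (t : M) (b : B) :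
    (ι t * b) ⊗ₜ 1 - 1 ⊗ₜ (ι t * b) ∈ range ν := by
  have hlift : ι t * σ (ψ b) = ι t * b := by
    rw [← sub_eq_zero, ← mul_sub]
    exact mul_eq_zero_of_mem_span_range hcomm hsq t (hker _ (by simp [hσ]))
  exact ⟨ψ b ⊗ₜ t, by rw [hν, ← (hcomm t _).eq, hlift]⟩

theorem ker_map_le_sup {ψ : B →ₐ[R] A} (hψ : Function.Surjective ψ) {ι : M → B}
    (hcomm : ∀ t b, Commute (ι t) b) (hsq : ∀ t t', ι t * ι t' = 0)
    (hker : ∀ x, ψ x = 0 → x ∈ Ideal.span (Set.range ι)) {σ : A →ₗ[R] B}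
    (hσ : ∀ y, ψ (σ y) = y) {ν : A ⊗[R] M →ₗ[R] B ⊗[R] B}
    (hν : ∀ y t, ν (y ⊗ₜ t) = (ι t * σ y) ⊗ₜ 1 - 1 ⊗ₜ (σ y * ι t)) :
    ker (map ψ.toLinearMap ψ.toLinearMap) ≤
      twoSidedMultiples R ι ⊔ range ν ⊔ range ((TensorProduct.mk R B B).flip 1) := by
  set N := twoSidedMultiples R ι ⊔ range ν ⊔ range ((TensorProduct.mk R B B).flip 1)
  have hK {x} (hx : x ∈ twoSidedMultiples R ι) : x ∈ N :=
    Submodule.mem_sup_left (Submodule.mem_sup_left hx)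
  have hν' {x} (hx : x ∈ range ν) : x ∈ N := Submodule.mem_sup_left (Submodule.mem_sup_right hx)
  have hone (b : B) : b ⊗ₜ[R] (1 : B) ∈ N := Submodule.mem_sup_right ⟨b, rfl⟩
  rw [TensorProduct.map_ker (exact_subtype_ker_map ψ.toLinearMap) hψ
    (exact_subtype_ker_map ψ.toLinearMap) hψ]
  refine sup_le ?_ ?_ <;> rw [range_eq_map, ← span_tmul_eq_top, Submodule.map_span_le]
  · rintro _ ⟨b, j, rfl⟩
    refine Ideal.restrictScalars_span_range_le (N := N.comap (TensorProduct.mk R B B b)) hcomm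
      (fun t c => ?_) (hker j j.2)
    have h : b ⊗ₜ (ι t * c) =
        (lTensor B (mulRight R (ι t)) (b ⊗ₜ c) - 1 ⊗ₜ (mul' R B (b ⊗ₜ c) * ι t)) -
          ((ι t * (b * c)) ⊗ₜ 1 - 1 ⊗ₜ (ι t * (b * c))) + (ι t * (b * c)) ⊗ₜ 1 := by
      simp only [lTensor_tmul, mulRight_apply, mul'_apply, (hcomm t _).eq, mul_assoc]
      abel
    rw [Submodule.mem_comap, mk_apply, h]
    exact add_mem (sub_mem (hK (lTensor_mulRight_sub_mem_twoSidedMultiples ι t _))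
      (hν' (mul_tmul_one_sub_one_tmul_mul_mem_range hcomm hsq hker hσ hν t _))) (hone _)
  · rintro _ ⟨j, b, rfl⟩
    refine Ideal.restrictScalars_span_range_le
      (N := N.comap ((TensorProduct.mk R B B).flip b)) hcomm (fun t c => ?_) (hker j j.2)
    have h : (ι t * c) ⊗ₜ b =
        (rTensor B (mulLeft R (ι t)) (c ⊗ₜ b) - (ι t * mul' R B (c ⊗ₜ b)) ⊗ₜ 1) +
          (ι t * (c * b)) ⊗ₜ 1 := by
      simp
    rw [Submodule.mem_comap, flip_apply, mk_apply, h]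
    exact add_mem (hK (rTensor_mulLeft_sub_mem_twoSidedMultiples ι t _)) (hone _)

theorem ker_mul'_inf_ker_map_eq {ψ : B →ₐ[R] A} (hψ : Function.Surjective ψ) {ι : M → B}
    (hcomm : ∀ t b, Commute (ι t) b) (hsq : ∀ t t', ι t * ι t' = 0)
    (hker : ∀ x, ψ x = 0 → x ∈ Ideal.span (Set.range ι)) (hψι : ∀ t, ψ (ι t) = 0)
    {σ : A →ₗ[R] B} (hσ : ∀ y, ψ (σ y) = y) {ν : A ⊗[R] M →ₗ[R] B ⊗[R] B}
    (hν : ∀ y t, ν (y ⊗ₜ t) = (ι t * σ y) ⊗ₜ 1 - 1 ⊗ₜ (σ y * ι t)) :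
    ker (mul' R B) ⊓ ker (map ψ.toLinearMap ψ.toLinearMap) = twoSidedMultiples R ι ⊔ range ν := by
  have hI : twoSidedMultiples R ι ⊔ range ν ≤ ker (mul' R B) :=
    sup_le (twoSidedMultiples_le_ker_mul' ι) (range_le_ker_mul'_of_boundary hcomm hν)
  refine le_antisymm (fun w ⟨hwI, hwψ⟩ => ?_)
    (le_inf hI (sup_le (twoSidedMultiples_le_ker_map hψι) (range_le_ker_map_of_boundary hψι hν)))
  obtain ⟨y, hy, _, ⟨b, rfl⟩, rfl⟩ :=
    Submodule.mem_sup.mp (ker_map_le_sup hψ hcomm hsq hker hσ hν hwψ)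
  have hb : b = 0 := by simpa [mem_ker.mp (hI hy)] using hwI
  simpa [hb] using hy

def tensorMulRight (ℓ : B →ₗ[R] A ⊗[R] M) (φ : B →ₗ[R] A) : B ⊗[R] B →ₗ[R] A ⊗[R] M :=
  TensorProduct.lift ((rTensorHom M ∘ₗ (mul R A).flip ∘ₗ φ).flip ∘ₗ ℓ)

@[simp]
theorem tensorMulRight_tmul (ℓ : B →ₗ[R] A ⊗[R] M) (φ : B →ₗ[R] A) (b c : B) :
    tensorMulRight ℓ φ (b ⊗ₜ c) = rTensor M (mulRight R (φ c)) (ℓ b) :=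
  rfl

theorem eq_zero_of_boundary_mem_twoSidedMultiples {ι : M → B} {ψ : B →ₐ[R] A}
    (hψι : ∀ t, ψ (ι t) = 0) {ℓ : B →ₗ[R] A ⊗[R] M} (hℓ : ∀ t b, ℓ (ι t * b) = ψ b ⊗ₜ t)
    {σ : A →ₗ[R] B} (hσ : ∀ y, ψ (σ y) = y) {ν : A ⊗[R] M →ₗ[R] B ⊗[R] B}
    (hν : ∀ y t, ν (y ⊗ₜ t) = (ι t * σ y) ⊗ₜ 1 - 1 ⊗ₜ (σ y * ι t)) {w : A ⊗[R] M}
    (hw : ν w ∈ twoSidedMultiples R ι) : w = 0 := by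
  set q := tensorMulRight ℓ ψ.toLinearMap
  have hqν : q ∘ₗ ν = LinearMap.id := TensorProduct.ext' fun y t => by simp [q, hν, hℓ, hψι, hσ]
  have hleft t : q ∘ₗ rTensor B (mulLeft R (ι t)) =
      (TensorProduct.mk R A M).flip t ∘ₗ ψ.toLinearMap ∘ₗ mul' R B :=
    TensorProduct.ext' fun b c => by simp [q, hℓ]
  have hright t : q ∘ₗ lTensor B (mulRight R (ι t)) = 0 :=
    TensorProduct.ext' fun b c => by simp [q, hψι]
  have hqK : twoSidedMultiples R ι ≤ ker q := twoSidedMultiples_le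
    (fun t x hx => by simpa [mem_ker.mp hx] using LinearMap.congr_fun (hleft t) x)
    (fun t x _ => LinearMap.congr_fun (hright t) x)
  simpa using (LinearMap.congr_fun hqν w).symm.trans (hqK hw)

end Boundary

noncomputable section

variable {k : Type*} [Field k] [CharZero k]
variable {A : Type*} [Ring A] [Algebra k A]
variable {T : Type*} [AddCommGroup T] [Module k T] [FiniteDimensional k T]

/-- The fundamental four-term exact sequence `0 → a ⊗ T* → N → a ⊗ a → a → 0` attached to an
`O`-deformation `(B, ψ)` of `a` (with `O = k ⊕ T*` the square-zero extension).  Here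
`I := ker(m_B : B ⊗ B → B)`, `N := I/(T*·I + I·T*)` is the two-sided reduction of `I` modulo
`T*` (realized below via the submodule `K = K₁ ⊔ K₂ ≤ I`), `u : N → a ⊗ a` is induced by the
map `g₂ = ψ ⊗ ψ` restricted to `I`, and `ν : a ⊗ T* → N` sends `y ⊗ t` to the class of
`(t·x) ⊗ 1 − 1 ⊗ (x·t)` where `x = σ(y)` is any lift of `y` under `ψ`.  Exactness is
expressed without forming the quotient `N`:  `ν` is injective into `N` (its values lie in `K`
only for `w = 0`), the kernel of `u` equals the image of `ν`
(`I ∩ ker g₂ = K ⊔ range ν`), `ker(m_a) = g₂(I)` and `m_a` is onto. -/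
theorem deformation_four_term_exact_sequence
    (B : Type*) [Ring B] [Algebra k B]
    [Algebra (TrivSqZeroExt k (Module.Dual k T)) B]
    [IsScalarTower k (TrivSqZeroExt k (Module.Dual k T)) B]
    [Module.Free (TrivSqZeroExt k (Module.Dual k T)) B]
    (ψ : B →ₐ[k] A) (hsurj : Function.Surjective ψ)
    (hker : ∀ x : B, ψ x = 0 ↔ x ∈ Ideal.span (Set.range fun t : Module.Dual k T =>
      algebraMap (TrivSqZeroExt k (Module.Dual k T)) B (TrivSqZeroExt.inr t)))
    -- the image of `T* ⊆ O` in `B`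
    (ι : Module.Dual k T → B)
    (hι : ι = fun t => algebraMap (TrivSqZeroExt k (Module.Dual k T)) B (TrivSqZeroExt.inr t))
    -- the kernel of multiplication
    (I : Submodule k (B ⊗[k] B)) (hI : I = LinearMap.ker (LinearMap.mul' k B))
    -- `K = T*·I_A + I_A·T*`
    (K : Submodule k (B ⊗[k] B))
    (hK : K = Submodule.span k {y : B ⊗[k] B | ∃ t : Module.Dual k T, ∃ x ∈ I,
        y = LinearMap.rTensor B (LinearMap.mulLeft k (ι t)) x} ⊔
      Submodule.span k {y : B ⊗[k] B | ∃ t : Module.Dual k T, ∃ x ∈ I,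
        y = LinearMap.lTensor B (LinearMap.mulRight k (ι t)) x})
    -- the two-sided reduction `B ⊗ B → a ⊗ a`
    (g₂ : B ⊗[k] B →ₗ[k] A ⊗[k] A)
    (hg₂ : g₂ = TensorProduct.map ψ.toLinearMap ψ.toLinearMap)
    -- a `k`-linear section of `ψ`
    (σ : A →ₗ[k] B) (hσ : ∀ y : A, ψ (σ y) = y)
    -- the boundary map `ν : a ⊗ T* → I_A`, `y ⊗ t ↦ (t·σy) ⊗ 1 − 1 ⊗ (σy·t)`
    (ν : A ⊗[k] Module.Dual k T →ₗ[k] B ⊗[k] B)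
    (hν : ∀ (y : A) (t : Module.Dual k T),
      ν (y ⊗ₜ[k] t) = (ι t * σ y) ⊗ₜ[k] (1 : B) - (1 : B) ⊗ₜ[k] (σ y * ι t)) :
    -- the sequence `0 → a ⊗ T* → I/K → a ⊗ a → a → 0` makes sense and is exact:
    (K ≤ I) ∧
    (LinearMap.range ν ≤ I) ∧
    (∀ w : A ⊗[k] Module.Dual k T, ν w ∈ K → w = 0) ∧
    (I ⊓ LinearMap.ker g₂ = K ⊔ LinearMap.range ν) ∧
    (LinearMap.ker (LinearMap.mul' k A) = Submodule.map g₂ I) ∧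
    Function.Surjective (LinearMap.mul' k A) := by
  subst hI hg₂
  obtain rfl : K = twoSidedMultiples k ι := hK
  rw [← hι] at hker
  have hιt t : algebraMap _ B (TrivSqZeroExt.inr t) = ι t := (congrFun hι t).symm
  have hcomm t b : Commute (ι t) b := hιt t ▸ Algebra.commute_algebraMap_left _ b
  have hsq t t' : ι t * ι t' = 0 := by
    rw [← hιt, ← hιt, ← map_mul, TrivSqZeroExt.inr_mul_inr, map_zero]
  have hψι t : ψ (ι t) = 0 := (hker _).mpr (Ideal.subset_span ⟨t, rfl⟩)
  obtain ⟨ℓ, hℓ⟩ := TrivSqZeroExt.exists_linearMap_inr_smul (M := Module.Dual k T)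
    ψ.toLinearMap fun t b => by simp [Algebra.smul_def, hιt, hψι]
  have hℓι t b : ℓ (ι t * b) = ψ b ⊗ₜ t := by simpa [Algebra.smul_def, hιt] using hℓ t b
  exact ⟨twoSidedMultiples_le_ker_mul' ι, range_le_ker_mul'_of_boundary hcomm hν,
    fun _ hw => eq_zero_of_boundary_mem_twoSidedMultiples hψι hℓι hσ hν hw,
    ker_mul'_inf_ker_map_eq hsurj hcomm hsq (fun x => (hker x).mp) hψι hσ hν,
    LinearMap.ker_mul'_eq_map_ker_mul' hsurj, LinearMap.mul'_surjective⟩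
end
end

section
/- (Cuntz–Quillen conormal sequence.) Let k be a field, A a unital associative k-algebra, J ⊆ A a two-sided ideal, and a = A/J. Let I_A = ker(A ⊗_k A → A) and I_a = ker(a ⊗_k a → a) be the kernels of the multiplication maps. Then the sequence of a-bimodules 0 → J/J² →^d I_A/(J·I_A + I_A·J) → I_a → 0 is exact, where d sends the class of j ∈ J to the class of j ⊗ 1 − 1 ⊗ j ∈ I_A, and the second map is induced by the inclusion I_A ⊆ A ⊗_k A followed by the reduction A ⊗_k A → a ⊗_k a. (Here J·I_A and I_A·J denote the spans of (j⊗1)·x and x·(1⊗j) for j ∈ J, x ∈ I_A.) -/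
open scoped TensorProduct

noncomputable section

set_option maxHeartbeats 1000000

/-- Auxiliary map `N : B ⊗ B → B ⊗ B`, `a ⊗ b ↦ (a*b) ⊗ 1 - a ⊗ b`. -/
def CQNmap (k : Type*) [Field k] (B : Type*) [Ring B] [Algebra k B] :
    B ⊗[k] B →ₗ[k] B ⊗[k] B :=
  ((TensorProduct.mk k B B).flip 1).comp (LinearMap.mul' k B) - LinearMap.id

lemma CQNmap_apply {k : Type*} [Field k] {B : Type*} [Ring B] [Algebra k B] (x : B ⊗[k] B) :
    CQNmap k B x = (LinearMap.mul' k B x) ⊗ₜ[k] (1 : B) - x := by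
  simp [CQNmap]

lemma CQNmap_tmul {k : Type*} [Field k] {B : Type*} [Ring B] [Algebra k B] (a b : B) :
    CQNmap k B (a ⊗ₜ[k] b) = (a * b) ⊗ₜ[k] (1 : B) - a ⊗ₜ[k] b := by
  simp [CQNmap_apply]

lemma mul'_CQNmap {k : Type*} [Field k] {B : Type*} [Ring B] [Algebra k B] (x : B ⊗[k] B) :
    LinearMap.mul' k B (CQNmap k B x) = 0 := by
  simp [CQNmap_apply]

/-- The Cuntz–Quillen conormal exact sequence.  Let `k` be a field, `A` a unital associative
`k`-algebra, and `a = A/J` the quotient of `A` by a two-sided ideal `J`, realized by a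
surjective `k`-algebra map `π : A → a` with kernel `J`.  Let `I_A = ker(m_A : A ⊗ A → A)`
and `I_a = ker(m_a : a ⊗ a → a)`, let `K = J·I_A + I_A·J` (so that `I_A/K` realizes
`a ⊗_A I_A ⊗_A a`), let `δ : A → A ⊗ A` be `x ↦ x ⊗ 1 − 1 ⊗ x` and `g₂ = π ⊗ π`.
Then the sequence of `a`-bimodules `0 → J/J² →^d I_A/K → I_a → 0` is exact, where `d` is
induced by `δ` and the second map is induced by `g₂`.  Exactness is expressed without
forming quotients: `δ(J²) ⊆ K` and `δ` is injective modulo `K` on `J/J²`; the kernel of the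
map induced by `g₂` equals the image of `d` (`I_A ∩ ker g₂ = K ⊔ δ(J)`); and `g₂` maps
`I_A` onto `I_a`. -/
theorem cuntz_quillen_conormal_sequence
    {k : Type*} [Field k]
    {A : Type*} [Ring A] [Algebra k A]
    {Aq : Type*} [Ring Aq] [Algebra k Aq]
    (π : A →ₐ[k] Aq) (hπ : Function.Surjective π)
    (J : Submodule k A) (hJ : J = LinearMap.ker π.toLinearMap)
    (Jsq : Submodule k A)
    (hJsq : Jsq = Submodule.span k {y : A | ∃ u ∈ J, ∃ v ∈ J, y = u * v})
    (IA : Submodule k (A ⊗[k] A)) (hIA : IA = LinearMap.ker (LinearMap.mul' k A))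
    (Ia : Submodule k (Aq ⊗[k] Aq)) (hIa : Ia = LinearMap.ker (LinearMap.mul' k Aq))
    (K : Submodule k (A ⊗[k] A))
    (hK : K = Submodule.span k {y : A ⊗[k] A | ∃ j ∈ J, ∃ x ∈ IA,
        y = LinearMap.rTensor A (LinearMap.mulLeft k j) x} ⊔
      Submodule.span k {y : A ⊗[k] A | ∃ j ∈ J, ∃ x ∈ IA,
        y = LinearMap.lTensor A (LinearMap.mulRight k j) x})
    (δ : A →ₗ[k] A ⊗[k] A)
    (hδ : ∀ x : A, δ x = x ⊗ₜ[k] (1 : A) - (1 : A) ⊗ₜ[k] x)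
    (g₂ : A ⊗[k] A →ₗ[k] Aq ⊗[k] Aq)
    (hg₂ : g₂ = TensorProduct.map π.toLinearMap π.toLinearMap) :
    -- the sequence makes sense:
    (K ≤ IA) ∧ (∀ j ∈ J, δ j ∈ IA) ∧
    -- `d : J/J² → I_A/K` is well defined ...
    (∀ y ∈ Jsq, δ y ∈ K) ∧
    -- ... and injective (exactness at `J/J²`):
    (∀ j ∈ J, δ j ∈ K → j ∈ Jsq) ∧
    -- exactness at `I_A/K`:
    (IA ⊓ LinearMap.ker g₂ = K ⊔ Submodule.map δ J) ∧
    -- exactness at `I_a`: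
    (Submodule.map g₂ IA = Ia) := by
  obtain ⟨s, hs⟩ := π.toLinearMap.exists_rightInverse_of_surjective
    (LinearMap.range_eq_top.2 hπ)
  have hsa : ∀ u, π (s u) = u := fun u => congrArg (fun f => f u) hs
  have hmemJ : ∀ x : A, x ∈ J ↔ π x = 0 := by
    intro x; rw [hJ]; exact LinearMap.mem_ker
  have hρJ : ∀ x : A, x - s (π x) ∈ J := by
    intro x; rw [hmemJ]; simp [hsa]
  -- δ lands in IA
  have hδIA : ∀ x : A, δ x ∈ IA := by
    intro x; rw [hIA, LinearMap.mem_ker, hδ]; simp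
  -- K ≤ IA
  have hKIA : K ≤ IA := by
    rw [hK, sup_le_iff]
    constructor <;> rw [Submodule.span_le] <;> rintro y ⟨j, hj, x, hx, rfl⟩ <;>
      simp only [hIA, SetLike.mem_coe, LinearMap.mem_ker] at hx ⊢
    · have hcomp : (LinearMap.mul' k A) ∘ₗ (LinearMap.rTensor A (LinearMap.mulLeft k j)) =
          (LinearMap.mulLeft k j) ∘ₗ (LinearMap.mul' k A) := by
        apply TensorProduct.ext'
        intro a b; simp [mul_assoc]
      have := congrArg (fun f => f x) hcomp
      simp only [LinearMap.comp_apply] at this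
      rw [this, hx]
      simp
    · have hcomp : (LinearMap.mul' k A) ∘ₗ (LinearMap.lTensor A (LinearMap.mulRight k j)) =
          (LinearMap.mulRight k j) ∘ₗ (LinearMap.mul' k A) := by
        apply TensorProduct.ext'
        intro a b; simp [mul_assoc]
      have := congrArg (fun f => f x) hcomp
      simp only [LinearMap.comp_apply] at this
      rw [this, hx]
      simp
  -- K ≤ ker g₂
  have hKker : K ≤ LinearMap.ker g₂ := by
    rw [hK, sup_le_iff]
    constructor <;> rw [Submodule.span_le] <;> rintro y ⟨j, hj, x, hx, rfl⟩ <;>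
      simp only [SetLike.mem_coe, LinearMap.mem_ker] <;> rw [hmemJ] at hj
    · have hcomp : g₂ ∘ₗ (LinearMap.rTensor A (LinearMap.mulLeft k j)) = 0 := by
        apply TensorProduct.ext'
        intro a b; simp [hg₂, map_mul, hj]
      have := congrArg (fun f => f x) hcomp
      simpa using this
    · have hcomp : g₂ ∘ₗ (LinearMap.lTensor A (LinearMap.mulRight k j)) = 0 := by
        apply TensorProduct.ext'
        intro a b; simp [hg₂, map_mul, hj]
      have := congrArg (fun f => f x) hcomp
      simpa using this
  -- δ j ∈ ker g₂ for j ∈ J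
  have hδker : ∀ j ∈ J, δ j ∈ LinearMap.ker g₂ := by
    intro j hj
    rw [hmemJ] at hj
    rw [LinearMap.mem_ker, hδ]
    simp [hg₂, hj]
  -- δ(u*v) ∈ K for u v ∈ J
  have hδmul : ∀ u ∈ J, ∀ v ∈ J, δ (u * v) ∈ K := by
    intro u hu v hv
    have hsplit : δ (u * v) = LinearMap.rTensor A (LinearMap.mulLeft k u) (δ v) +
        LinearMap.lTensor A (LinearMap.mulRight k v) (δ u) := by
      simp only [hδ, map_sub, LinearMap.rTensor_tmul, LinearMap.lTensor_tmul,
        LinearMap.mulLeft_apply, LinearMap.mulRight_apply, mul_one, one_mul]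
      abel
    rw [hsplit, hK]
    exact Submodule.add_mem _
      (Submodule.mem_sup_left (Submodule.subset_span ⟨u, hu, δ v, hδIA v, rfl⟩))
      (Submodule.mem_sup_right (Submodule.subset_span ⟨v, hv, δ u, hδIA u, rfl⟩))
  have claim3 : ∀ y ∈ Jsq, δ y ∈ K := by
    intro y hy
    rw [hJsq] at hy
    induction hy using Submodule.span_induction with
    | mem z hz => obtain ⟨u, hu, v, hv, rfl⟩ := hz; exact hδmul u hu v hv
    | zero => simp
    | add a b _ _ ha hb => rw [map_add]; exact Submodule.add_mem _ ha hb
    | smul c a _ ha => rw [map_smul]; exact Submodule.smul_mem _ _ ha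
  -- the map M detecting injectivity modulo J²
  let M : A ⊗[k] A →ₗ[k] A ⧸ Jsq := TensorProduct.lift
    (LinearMap.mk₂ k (fun x y => Jsq.mkQ ((x - s (π x)) * y))
      (by intro x₁ x₂ y; rw [← map_add]; congr 1
          simp only [map_add]
          noncomm_ring)
      (by intro c x y; rw [← map_smul]; congr 1
          simp only [map_smul, ← smul_sub, smul_mul_assoc])
      (by intro x y₁ y₂; rw [← map_add]; congr 1; rw [mul_add])
      (by intro c x y; rw [← map_smul]; congr 1; rw [mul_smul_comm]))
  have hM : ∀ x y : A, M (x ⊗ₜ[k] y) = Jsq.mkQ ((x - s (π x)) * y) := fun x y => rfl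
  have hJsqmem : ∀ u ∈ J, ∀ v ∈ J, u * v ∈ Jsq := by
    intro u hu v hv
    rw [hJsq]
    exact Submodule.subset_span ⟨u, hu, v, hv, rfl⟩
  have hMK : ∀ z ∈ K, M z = 0 := by
    have hle : K ≤ LinearMap.ker M := by
      rw [hK, sup_le_iff]
      constructor <;> rw [Submodule.span_le] <;> rintro y ⟨j, hj, x, hx, rfl⟩ <;>
        simp only [SetLike.mem_coe, LinearMap.mem_ker]
      · have hj0 : π j = 0 := (hmemJ j).1 hj
        have hcomp : M ∘ₗ (LinearMap.rTensor A (LinearMap.mulLeft k j)) =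
            Jsq.mkQ ∘ₗ (LinearMap.mulLeft k j) ∘ₗ (LinearMap.mul' k A) := by
          apply TensorProduct.ext'
          intro a b
          simp only [LinearMap.comp_apply, LinearMap.rTensor_tmul,
            LinearMap.mulLeft_apply, LinearMap.mul'_apply, hM]
          have hpja : π (j * a) = 0 := by rw [map_mul, hj0, zero_mul]
          rw [hpja, map_zero, sub_zero, mul_assoc]
        have hcx := congrArg (fun f => f x) hcomp
        simp only [LinearMap.comp_apply] at hcx
        rw [hIA, LinearMap.mem_ker] at hx
        rw [hcx, hx]
        simp
      · have hcomp : M ∘ₗ (LinearMap.lTensor A (LinearMap.mulRight k j)) = 0 := by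
          apply TensorProduct.ext'
          intro a b
          simp only [LinearMap.comp_apply, LinearMap.lTensor_tmul,
            LinearMap.mulRight_apply, hM, LinearMap.zero_apply]
          rw [Submodule.mkQ_apply, Submodule.Quotient.mk_eq_zero]
          have hbj : b * j ∈ J := by
            rw [hmemJ, map_mul, (hmemJ j).1 hj, mul_zero]
          exact hJsqmem _ (hρJ a) _ hbj
        have hcx := congrArg (fun f => f x) hcomp
        simpa using hcx
    intro z hz
    exact hle hz
  have hMδ : ∀ j ∈ J, M (δ j) = Jsq.mkQ j := by
    intro j hj
    rw [hδ, map_sub, hM, hM]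
    have hj0 : π j = 0 := (hmemJ j).1 hj
    rw [hj0, map_zero, sub_zero, mul_one, map_one]
    have hz : Jsq.mkQ (((1 : A) - s 1) * j) = 0 := by
      rw [Submodule.mkQ_apply, Submodule.Quotient.mk_eq_zero]
      have h1 : (1 : A) - s 1 ∈ J := by
        have := hρJ 1
        rwa [map_one] at this
      exact hJsqmem _ h1 _ hj
    rw [hz, sub_zero]
  have claim4 : ∀ j ∈ J, δ j ∈ K → j ∈ Jsq := by
    intro j hj hjk
    have h := hMδ j hj
    rw [hMK _ hjk] at h
    rw [← Submodule.Quotient.mk_eq_zero, ← Submodule.mkQ_apply]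
    exact h.symm
  -- Q := K ⊔ δ(J), and the retraction L of g₂ modulo Q
  set Q : Submodule k (A ⊗[k] A) := K ⊔ Submodule.map δ J with hQdef
  have hKQ : K ≤ Q := le_sup_left
  have hE1 : ∀ j ∈ J, ∀ b : A, (j * b) ⊗ₜ[k] (1 : A) - j ⊗ₜ[k] b ∈ K := by
    intro j hj b
    have hid : (j * b) ⊗ₜ[k] (1 : A) - j ⊗ₜ[k] b =
        LinearMap.rTensor A (LinearMap.mulLeft k j) (δ b) := by
      simp [hδ]
    rw [hid, hK]
    exact Submodule.mem_sup_left (Submodule.subset_span ⟨j, hj, δ b, hδIA b, rfl⟩)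
  have hE2 : ∀ c : A, ∀ l ∈ J, (c * l) ⊗ₜ[k] (1 : A) - c ⊗ₜ[k] l ∈ Q := by
    intro c l hl
    have hcl : c * l ∈ J := by
      rw [hmemJ, map_mul, (hmemJ l).1 hl, mul_zero]
    have hsplit : (c * l) ⊗ₜ[k] (1 : A) - c ⊗ₜ[k] l =
        δ (c * l) - LinearMap.lTensor A (LinearMap.mulRight k l) (δ c) := by
      simp only [hδ, map_sub, LinearMap.lTensor_tmul, LinearMap.mulRight_apply, one_mul]
      abel
    rw [hsplit]
    refine Submodule.sub_mem _ (Submodule.mem_sup_right (Submodule.mem_map_of_mem hcl)) (hKQ ?_)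
    rw [hK]
    exact Submodule.mem_sup_right (Submodule.subset_span ⟨l, hl, δ c, hδIA c, rfl⟩)
  let L : Aq ⊗[k] Aq →ₗ[k] (A ⊗[k] A) ⧸ Q := TensorProduct.lift
    (LinearMap.mk₂ k (fun u v => Q.mkQ (s u ⊗ₜ[k] s v - (s u * s v) ⊗ₜ[k] (1 : A)))
      (by intro u₁ u₂ v; rw [← map_add]; congr 1
          simp only [map_add, TensorProduct.add_tmul, add_mul]
          abel)
      (by intro c u v; rw [← map_smul]; congr 1
          simp only [map_smul, TensorProduct.smul_tmul', smul_sub, smul_mul_assoc])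
      (by intro u v₁ v₂; rw [← map_add]; congr 1
          simp only [map_add, TensorProduct.tmul_add, TensorProduct.add_tmul, mul_add]
          abel)
      (by intro c u v; rw [← map_smul]; congr 1
          simp only [map_smul, TensorProduct.tmul_smul, TensorProduct.smul_tmul',
            smul_sub, mul_smul_comm]))
  have hL : ∀ u v : Aq,
      L (u ⊗ₜ[k] v) = Q.mkQ (s u ⊗ₜ[k] s v - (s u * s v) ⊗ₜ[k] (1 : A)) := fun u v => rfl
  -- mkQ (E a b) only depends on π a, π b
  have hEkey : ∀ a b : A,
      Q.mkQ ((a * b) ⊗ₜ[k] (1 : A) - a ⊗ₜ[k] b) =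
      Q.mkQ ((s (π a) * s (π b)) ⊗ₜ[k] (1 : A) - s (π a) ⊗ₜ[k] s (π b)) := by
    intro a b
    rw [Submodule.mkQ_apply, Submodule.mkQ_apply, Submodule.Quotient.eq]
    have hid : ((a * b) ⊗ₜ[k] (1 : A) - a ⊗ₜ[k] b) -
        ((s (π a) * s (π b)) ⊗ₜ[k] (1 : A) - s (π a) ⊗ₜ[k] s (π b)) =
        (((a - s (π a)) * b) ⊗ₜ[k] (1 : A) - (a - s (π a)) ⊗ₜ[k] b) +
        ((s (π a) * (b - s (π b))) ⊗ₜ[k] (1 : A) - s (π a) ⊗ₜ[k] (b - s (π b))) := by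
      simp only [sub_mul, mul_sub, TensorProduct.sub_tmul, TensorProduct.tmul_sub]
      abel
    rw [hid]
    exact Submodule.add_mem _ (hKQ (hE1 _ (hρJ a) b)) (hE2 _ _ (hρJ b))
  -- the main identity : L ∘ g₂ is the identity on IA modulo Q
  have hmain : ∀ x : A ⊗[k] A, L (g₂ (CQNmap k A x)) = Q.mkQ (CQNmap k A x) := by
    intro x
    induction x using TensorProduct.induction_on with
    | zero => simp
    | add a b ha hb => rw [map_add, map_add, map_add, ha, hb, map_add]
    | tmul a b =>
      rw [CQNmap_tmul]
      have hg : g₂ ((a * b) ⊗ₜ[k] (1 : A) - a ⊗ₜ[k] b) =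
          (π a * π b) ⊗ₜ[k] (1 : Aq) - π a ⊗ₜ[k] π b := by
        simp [hg₂, map_mul]
      rw [hg, map_sub]
      have h1 : L ((π a * π b) ⊗ₜ[k] (1 : Aq)) = 0 := by
        rw [hL, Submodule.mkQ_apply, Submodule.Quotient.mk_eq_zero]
        set c := s (π a * π b) with hc
        have hm : (1 : A) - s 1 ∈ J := by
          have := hρJ 1; rwa [map_one] at this
        have hid : c ⊗ₜ[k] s 1 - (c * s 1) ⊗ₜ[k] (1 : A) =
            (c * ((1 : A) - s 1)) ⊗ₜ[k] (1 : A) - c ⊗ₜ[k] ((1 : A) - s 1) := by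
          simp only [mul_sub, mul_one, TensorProduct.sub_tmul, TensorProduct.tmul_sub]
          abel
        rw [hid]
        exact hE2 c _ hm
      rw [h1, zero_sub, hL, ← map_neg, neg_sub]
      exact (hEkey a b).symm
  -- exactness at I_A/K
  have claim5 : IA ⊓ LinearMap.ker g₂ = K ⊔ Submodule.map δ J := by
    apply le_antisymm
    · rintro x ⟨hxIA, hxker⟩
      simp only [hIA, SetLike.mem_coe, LinearMap.mem_ker] at hxIA
      simp only [SetLike.mem_coe, LinearMap.mem_ker] at hxker
      have hNx : CQNmap k A x = -x := by
        rw [CQNmap_apply, hxIA]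
        simp
      have h := hmain x
      rw [hNx, map_neg, hxker, neg_zero, map_zero, map_neg] at h
      have hx0 : Q.mkQ x = 0 := by
        rw [← neg_neg (Q.mkQ x), ← h, neg_zero]
      rw [Submodule.mkQ_apply, Submodule.Quotient.mk_eq_zero] at hx0
      exact hx0
    · rw [sup_le_iff]
      constructor
      · exact le_inf hKIA hKker
      · rintro y ⟨j, hj, rfl⟩
        exact ⟨hδIA j, hδker j hj⟩
  -- exactness at I_a
  have claim6 : Submodule.map g₂ IA = Ia := by
    apply le_antisymm
    · rintro y ⟨x, hx, rfl⟩
      simp only [hIA, SetLike.mem_coe, LinearMap.mem_ker] at hx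
      rw [hIa, LinearMap.mem_ker]
      have hcomp : (LinearMap.mul' k Aq) ∘ₗ g₂ = π.toLinearMap ∘ₗ (LinearMap.mul' k A) := by
        apply TensorProduct.ext'
        intro a b; simp [hg₂, map_mul]
      have hcx := congrArg (fun f => f x) hcomp
      simp only [LinearMap.comp_apply] at hcx
      rw [hcx, hx]
      simp
    · intro x hx
      rw [hIa, LinearMap.mem_ker] at hx
      have hNx : CQNmap k Aq x = -x := by
        rw [CQNmap_apply, hx]
        simp
      have hN : ∀ y : Aq ⊗[k] Aq, CQNmap k Aq y ∈ Submodule.map g₂ IA := by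
        intro y
        induction y using TensorProduct.induction_on with
        | zero => rw [map_zero]; exact Submodule.zero_mem _
        | add a b ha hb => rw [map_add]; exact Submodule.add_mem _ ha hb
        | tmul u v =>
          obtain ⟨a, rfl⟩ := hπ u
          obtain ⟨b, rfl⟩ := hπ v
          refine ⟨CQNmap k A (a ⊗ₜ[k] b), ?_, ?_⟩
          · simp only [hIA, SetLike.mem_coe, LinearMap.mem_ker]; exact mul'_CQNmap _
          · rw [CQNmap_tmul, CQNmap_tmul]
            simp [hg₂, map_mul]
      have := hN x
      rw [hNx] at this
      simpa using Submodule.neg_mem _ this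
  exact ⟨hKIA, fun j _ => hδIA j, claim3, claim4, claim5, claim6⟩
end
end

section
/- Let k be a field, A a unital associative k-algebra, J ⊆ A a two-sided ideal, and a = A/J. Let I_A = ker(A ⊗_k A → A). Then the following four-term sequence of a-bimodules is exact: 0 → J/J² →^d I_A/(J·I_A + I_A·J) →^u a ⊗_k a →^{m_a} a → 0, where d sends the class of j ∈ J to the class of j ⊗ 1 − 1 ⊗ j, u is induced by the inclusion I_A ⊆ A ⊗_k A followed by the reduction A ⊗_k A → a ⊗_k a, and m_a is the multiplication map of a. -/
open scoped TensorProduct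

noncomputable section

/-- The four-term exact sequence `0 → J/J² →^d I_A/(J·I_A + I_A·J) →^u a ⊗ a →^{m_a} a → 0`.
Let `k` be a field, `A` a unital associative `k`-algebra, and `a = A/J` the quotient of `A`
by a two-sided ideal `J`, realized by a surjective `k`-algebra map `π : A → a` with kernel
`J`.  Let `I_A = ker(m_A : A ⊗ A → A)`, `K = J·I_A + I_A·J`, `δ : A → A ⊗ A` the map
`x ↦ x ⊗ 1 − 1 ⊗ x` (inducing `d`), and `g₂ = π ⊗ π` (inducing `u`).  Exactness is
expressed without forming quotients: `δ(J²) ⊆ K`; `d` is injective on `J/J²`; the kernel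
of `u` equals the image of `d` (`I_A ∩ ker g₂ = K ⊔ δ(J)`); `ker(m_a) = g₂(I_A)`; and
`m_a` is surjective. -/
theorem four_term_conormal_sequence
    {k : Type*} [Field k]
    {A : Type*} [Ring A] [Algebra k A]
    {Aq : Type*} [Ring Aq] [Algebra k Aq]
    (π : A →ₐ[k] Aq) (hπ : Function.Surjective π)
    (J : Submodule k A) (hJ : J = LinearMap.ker π.toLinearMap)
    (Jsq : Submodule k A)
    (hJsq : Jsq = Submodule.span k {y : A | ∃ u ∈ J, ∃ v ∈ J, y = u * v})
    (IA : Submodule k (A ⊗[k] A)) (hIA : IA = LinearMap.ker (LinearMap.mul' k A))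
    (K : Submodule k (A ⊗[k] A))
    (hK : K = Submodule.span k {y : A ⊗[k] A | ∃ j ∈ J, ∃ x ∈ IA,
        y = LinearMap.rTensor A (LinearMap.mulLeft k j) x} ⊔
      Submodule.span k {y : A ⊗[k] A | ∃ j ∈ J, ∃ x ∈ IA,
        y = LinearMap.lTensor A (LinearMap.mulRight k j) x})
    (δ : A →ₗ[k] A ⊗[k] A)
    (hδ : ∀ x : A, δ x = x ⊗ₜ[k] (1 : A) - (1 : A) ⊗ₜ[k] x)
    (g₂ : A ⊗[k] A →ₗ[k] Aq ⊗[k] Aq)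
    (hg₂ : g₂ = TensorProduct.map π.toLinearMap π.toLinearMap) :
    -- the sequence makes sense:
    (K ≤ IA) ∧ (∀ j ∈ J, δ j ∈ IA) ∧
    -- `d : J/J² → I_A/K` is well defined ...
    (∀ y ∈ Jsq, δ y ∈ K) ∧
    -- ... and injective (exactness at `J/J²`):
    (∀ j ∈ J, δ j ∈ K → j ∈ Jsq) ∧
    -- exactness at `I_A/K`:
    (IA ⊓ LinearMap.ker g₂ = K ⊔ Submodule.map δ J) ∧
    -- exactness at `a ⊗ a`:
    (LinearMap.ker (LinearMap.mul' k Aq) = Submodule.map g₂ IA) ∧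
    -- exactness at `a`:
    Function.Surjective (LinearMap.mul' k Aq) := by
  have hJmem : ∀ a : A, π a = 0 → a ∈ J := fun a ha => hJ ▸ LinearMap.mem_ker.2 ha
  have hJ0 : ∀ j ∈ J, π j = 0 := fun j hj => by
    rw [hJ] at hj; exact hj
  have hIAmem : ∀ x ∈ IA, LinearMap.mul' k A x = 0 := fun x hx => by
    rw [hIA] at hx; exact hx
  have hIAmem' : ∀ x : A ⊗[k] A, LinearMap.mul' k A x = 0 → x ∈ IA := fun x hx =>
    hIA ▸ LinearMap.mem_ker.2 hx
  -- δ lands in IA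
  have hδIA : ∀ x : A, δ x ∈ IA := by
    intro x
    refine hIAmem' _ ?_
    rw [hδ]
    simp [LinearMap.mul'_apply]
  -- K ≤ IA
  have hKIA : K ≤ IA := by
    rw [hK]
    refine sup_le (Submodule.span_le.2 ?_) (Submodule.span_le.2 ?_) <;>
      rintro _ ⟨j, hj, x, hx, rfl⟩ <;> refine hIAmem' _ ?_
    · have : LinearMap.mul' k A ∘ₗ LinearMap.rTensor A (LinearMap.mulLeft k j)
          = LinearMap.mulLeft k j ∘ₗ LinearMap.mul' k A :=
        TensorProduct.ext' fun a b => by simp [LinearMap.mul'_apply, mul_assoc]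
      calc LinearMap.mul' k A (LinearMap.rTensor A (LinearMap.mulLeft k j) x)
          = (LinearMap.mulLeft k j ∘ₗ LinearMap.mul' k A) x := by
            rw [← this]; rfl
        _ = 0 := by rw [LinearMap.comp_apply, hIAmem x hx]; simp
    · have : LinearMap.mul' k A ∘ₗ LinearMap.lTensor A (LinearMap.mulRight k j)
          = LinearMap.mulRight k j ∘ₗ LinearMap.mul' k A :=
        TensorProduct.ext' fun a b => by simp [LinearMap.mul'_apply, mul_assoc]
      calc LinearMap.mul' k A (LinearMap.lTensor A (LinearMap.mulRight k j) x)
          = (LinearMap.mulRight k j ∘ₗ LinearMap.mul' k A) x := by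
            rw [← this]; rfl
        _ = 0 := by rw [LinearMap.comp_apply, hIAmem x hx]; simp
  -- part 3 : δ(J²) ⊆ K
  have h3 : ∀ y ∈ Jsq, δ y ∈ K := by
    have : Jsq ≤ K.comap δ := by
      rw [hJsq, Submodule.span_le]
      rintro _ ⟨u, hu, v, hv, rfl⟩
      have key : δ (u * v) = LinearMap.rTensor A (LinearMap.mulLeft k u) (δ v)
          + LinearMap.lTensor A (LinearMap.mulRight k v) (δ u) := by
        rw [hδ, hδ, hδ]
        simp only [map_sub, LinearMap.rTensor_tmul, LinearMap.lTensor_tmul,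
          LinearMap.mulLeft_apply, LinearMap.mulRight_apply, mul_one, one_mul]
        abel
      simp only [SetLike.mem_coe, Submodule.mem_comap]
      rw [key, hK]
      exact Submodule.add_mem _
        (Submodule.mem_sup_left (Submodule.subset_span ⟨u, hu, δ v, hδIA v, rfl⟩))
        (Submodule.mem_sup_right (Submodule.subset_span ⟨v, hv, δ u, hδIA u, rfl⟩))
    exact fun y hy => this hy
  -- a linear section of π
  obtain ⟨s, hs⟩ := π.toLinearMap.exists_rightInverse_of_surjective
    (LinearMap.range_eq_top.2 hπ)
  have hs' : ∀ y, π (s y) = y := fun y => congrArg (fun f => f y) hs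
  set q : A →ₗ[k] A := LinearMap.id - s ∘ₗ π.toLinearMap with hqdef
  have hq : ∀ a : A, q a = a - s (π a) := fun a => rfl
  have hqJ : ∀ a : A, q a ∈ J := by
    intro a; refine hJmem _ ?_
    rw [hq]; simp [hs']
  have hqj : ∀ j ∈ J, q j = j := by
    intro j hj
    rw [hq, hJ0 j hj, map_zero, sub_zero]
  -- the retraction R : A ⊗ A → A / J²
  set R : A ⊗[k] A →ₗ[k] A ⧸ Jsq :=
    Jsq.mkQ ∘ₗ LinearMap.mul' k A ∘ₗ LinearMap.rTensor A q with hRdef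
  have hRtmul : ∀ a b : A, R (a ⊗ₜ[k] b) = Jsq.mkQ (q a * b) := by
    intro a b; simp [hRdef, LinearMap.mul'_apply]
  have hJJ : ∀ u ∈ J, ∀ v ∈ J, u * v ∈ Jsq := by
    intro u hu v hv
    rw [hJsq]
    exact Submodule.subset_span ⟨u, hu, v, hv, rfl⟩
  have hRδ : ∀ j ∈ J, R (δ j) = Jsq.mkQ j := by
    intro j hj
    rw [hδ, map_sub, hRtmul, hRtmul, hqj j hj, mul_one]
    have h0 : Jsq.mkQ (q 1 * j) = 0 := by
      simpa [Submodule.mkQ_apply] using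
        (Submodule.Quotient.mk_eq_zero Jsq).2 (hJJ _ (hqJ 1) _ hj)
    rw [h0, sub_zero]
  have hRK : ∀ x ∈ K, R x = 0 := by
    have : K ≤ LinearMap.ker R := by
      rw [hK]
      refine sup_le (Submodule.span_le.2 ?_) (Submodule.span_le.2 ?_)
      · rintro _ ⟨j, hj, x, hx, rfl⟩
        have comp : R ∘ₗ LinearMap.rTensor A (LinearMap.mulLeft k j)
            = Jsq.mkQ ∘ₗ LinearMap.mulLeft k j ∘ₗ LinearMap.mul' k A := by
          refine TensorProduct.ext' fun a b => ?_
          have : q (j * a) = j * a := hqj _ (by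
            refine hJmem _ ?_; rw [map_mul, hJ0 j hj, zero_mul])
          simp [hRtmul, LinearMap.mul'_apply, this, mul_assoc]
        have := congrArg (fun f => f x) comp
        simp only [LinearMap.comp_apply] at this
        simp only [SetLike.mem_coe, LinearMap.mem_ker]
        rw [this, hIAmem x hx]
        simp
      · rintro _ ⟨j, hj, x, hx, rfl⟩
        have comp : R ∘ₗ LinearMap.lTensor A (LinearMap.mulRight k j) = 0 := by
          refine TensorProduct.ext' fun a b => ?_
          have h1 : q a * b ∈ J := by
            refine hJmem _ ?_
            rw [map_mul, hJ0 _ (hqJ a), zero_mul]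
          have : q a * (b * j) ∈ Jsq := by
            rw [← mul_assoc]; exact hJJ _ h1 _ hj
          simp [hRtmul, LinearMap.mulRight_apply,
            (Submodule.Quotient.mk_eq_zero Jsq).2 this]
        have := congrArg (fun f => f x) comp
        simp only [SetLike.mem_coe, LinearMap.mem_ker]
        simpa using this
    exact fun x hx => this hx
  have h4 : ∀ j ∈ J, δ j ∈ K → j ∈ Jsq := by
    intro j hj hjK
    have h1 := hRδ j hj
    rw [hRK _ hjK] at h1
    exact (Submodule.Quotient.mk_eq_zero Jsq).1 h1.symm
  -- membership lemmas for K
  have hKgen1 : ∀ j ∈ J, ∀ b : A, j ⊗ₜ[k] b - (j * b) ⊗ₜ[k] (1 : A) ∈ K := by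
    intro j hj b
    have hx : (1 : A) ⊗ₜ[k] b - b ⊗ₜ[k] (1 : A) ∈ IA := by
      refine hIAmem' _ ?_; simp [LinearMap.mul'_apply]
    have : j ⊗ₜ[k] b - (j * b) ⊗ₜ[k] (1 : A)
        = LinearMap.rTensor A (LinearMap.mulLeft k j) ((1 : A) ⊗ₜ[k] b - b ⊗ₜ[k] (1 : A)) := by
      simp [map_sub]
    rw [this, hK]
    exact Submodule.mem_sup_left (Submodule.subset_span ⟨j, hj, _, hx, rfl⟩)
  have hKgen2 : ∀ j ∈ J, ∀ a : A, a ⊗ₜ[k] j - (1 : A) ⊗ₜ[k] (a * j) ∈ K := by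
    intro j hj a
    have hx : a ⊗ₜ[k] (1 : A) - (1 : A) ⊗ₜ[k] a ∈ IA := by
      refine hIAmem' _ ?_; simp [LinearMap.mul'_apply]
    have : a ⊗ₜ[k] j - (1 : A) ⊗ₜ[k] (a * j)
        = LinearMap.lTensor A (LinearMap.mulRight k j) (a ⊗ₜ[k] (1 : A) - (1 : A) ⊗ₜ[k] a) := by
      simp [map_sub]
    rw [this, hK]
    exact Submodule.mem_sup_right (Submodule.subset_span ⟨j, hj, _, hx, rfl⟩)
  -- the maps c ↦ c ⊗ 1 and c ↦ 1 ⊗ c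
  set θ : A →ₗ[k] A ⊗[k] A := (TensorProduct.mk k A A).flip 1 with hθdef
  set θ' : A →ₗ[k] A ⊗[k] A := TensorProduct.mk k A A 1 with hθ'def
  have hθ : ∀ c : A, θ c = c ⊗ₜ[k] (1 : A) := fun c => rfl
  have hθ' : ∀ c : A, θ' c = (1 : A) ⊗ₜ[k] c := fun c => rfl
  set N : Submodule k (A ⊗[k] A) := K ⊔ Submodule.map θ J ⊔ Submodule.map θ' J with hNdef
  have hC1 : ∀ z : A ⊗[k] A, LinearMap.rTensor A q z ∈ N := by
    intro z
    induction z using TensorProduct.induction_on with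
    | zero => simp
    | tmul a b =>
        have hqab : q a * b ∈ J := hJmem _ (by rw [map_mul, hJ0 _ (hqJ a), zero_mul])
        have hsplit : LinearMap.rTensor A q (a ⊗ₜ[k] b)
            = (q a ⊗ₜ[k] b - (q a * b) ⊗ₜ[k] (1 : A)) + θ (q a * b) := by
          rw [hθ]; simp
        rw [hsplit]
        exact Submodule.add_mem _
          (Submodule.mem_sup_left (Submodule.mem_sup_left (hKgen1 _ (hqJ a) b)))
          (Submodule.mem_sup_left (Submodule.mem_sup_right (Submodule.mem_map_of_mem hqab)))
    | add x y hx hy => rw [map_add]; exact Submodule.add_mem _ hx hy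
  have hC2 : ∀ z : A ⊗[k] A, LinearMap.lTensor A q z ∈ N := by
    intro z
    induction z using TensorProduct.induction_on with
    | zero => simp
    | tmul a b =>
        have hqab : a * q b ∈ J := hJmem _ (by rw [map_mul, hJ0 _ (hqJ b), mul_zero])
        have hsplit : LinearMap.lTensor A q (a ⊗ₜ[k] b)
            = (a ⊗ₜ[k] q b - (1 : A) ⊗ₜ[k] (a * q b)) + θ' (a * q b) := by
          rw [hθ']; simp
        rw [hsplit]
        exact Submodule.add_mem _
          (Submodule.mem_sup_left (Submodule.mem_sup_left (hKgen2 _ (hqJ b) a)))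
          (Submodule.mem_sup_right (Submodule.mem_map_of_mem hqab))
    | add x y hx hy => rw [map_add]; exact Submodule.add_mem _ hx hy
  -- K and δ(J) are killed by g₂
  have hKker : K ≤ LinearMap.ker g₂ := by
    rw [hK]
    refine sup_le (Submodule.span_le.2 ?_) (Submodule.span_le.2 ?_) <;>
      rintro _ ⟨j, hj, x, hx, rfl⟩
    · have comp : g₂ ∘ₗ LinearMap.rTensor A (LinearMap.mulLeft k j) = 0 := by
        refine TensorProduct.ext' fun a b => ?_
        rw [hg₂]
        simp [map_mul, hJ0 j hj]
      have := congrArg (fun f => f x) comp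
      simpa [LinearMap.mem_ker] using this
    · have comp : g₂ ∘ₗ LinearMap.lTensor A (LinearMap.mulRight k j) = 0 := by
        refine TensorProduct.ext' fun a b => ?_
        rw [hg₂]
        simp [map_mul, hJ0 j hj]
      have := congrArg (fun f => f x) comp
      simpa [LinearMap.mem_ker] using this
  have hδker : ∀ j ∈ J, g₂ (δ j) = 0 := by
    intro j hj
    rw [hδ, hg₂]
    simp [hJ0 j hj]
  -- exactness at I_A/K
  have h5 : IA ⊓ LinearMap.ker g₂ = K ⊔ Submodule.map δ J := by
    apply le_antisymm
    · rintro x ⟨hxIA, hxker⟩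
      -- decomposition of the identity
      have hid : (LinearMap.id : A ⊗[k] A →ₗ[k] A ⊗[k] A)
          = LinearMap.rTensor A q
            + LinearMap.lTensor A q ∘ₗ LinearMap.rTensor A (s ∘ₗ π.toLinearMap)
            + TensorProduct.map (s ∘ₗ π.toLinearMap) (s ∘ₗ π.toLinearMap) := by
        refine TensorProduct.ext' fun a b => ?_
        simp only [LinearMap.id_coe, id_eq, LinearMap.add_apply, LinearMap.comp_apply,
          LinearMap.rTensor_tmul, LinearMap.lTensor_tmul, TensorProduct.map_tmul, hq,
          AlgHom.toLinearMap_apply, TensorProduct.sub_tmul, TensorProduct.tmul_sub]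
        abel
      have hmapss : TensorProduct.map (s ∘ₗ π.toLinearMap) (s ∘ₗ π.toLinearMap) x = 0 := by
        rw [TensorProduct.map_comp, LinearMap.comp_apply, ← hg₂,
          LinearMap.mem_ker.1 hxker, map_zero]
      have hxN : x ∈ N := by
        have hxd := congrArg (fun f => f x) hid
        simp only [LinearMap.id_coe, id_eq, LinearMap.add_apply, LinearMap.comp_apply] at hxd
        rw [hmapss, add_zero] at hxd
        rw [hxd]
        exact Submodule.add_mem _ (hC1 x) (hC2 _)
      -- extract the decomposition  x = m + c ⊗ 1 + 1 ⊗ c'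
      rw [hNdef] at hxN
      obtain ⟨y, hy, _, ⟨c', hc', rfl⟩, rfl⟩ := Submodule.mem_sup.1 hxN
      obtain ⟨m, hm, _, ⟨c, hc, rfl⟩, rfl⟩ := Submodule.mem_sup.1 hy
      have hmul : c + c' = 0 := by
        have h0 : LinearMap.mul' k A (m + θ c + θ' c') = 0 := hIAmem _ hxIA
        rw [map_add, map_add, hIAmem m (hKIA hm), hθ, hθ', zero_add] at h0
        simpa [LinearMap.mul'_apply] using h0
      have hc'c : c' = -c := eq_neg_of_add_eq_zero_right hmul
      have hrw : m + θ c + θ' c' = m + δ c := by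
        rw [hc'c, hθ, hθ', hδ, TensorProduct.tmul_neg]
        abel
      rw [hrw]
      exact Submodule.add_mem _ (Submodule.mem_sup_left hm)
        (Submodule.mem_sup_right (Submodule.mem_map_of_mem hc))
    · refine sup_le (le_inf hKIA hKker) ?_
      rintro _ ⟨j, hj, rfl⟩
      exact ⟨hδIA j, LinearMap.mem_ker.2 (hδker j hj)⟩
  -- exactness at a ⊗ a
  have hmulcomm : LinearMap.mul' k Aq ∘ₗ g₂ = π.toLinearMap ∘ₗ LinearMap.mul' k A := by
    rw [hg₂]
    exact TensorProduct.ext' fun a b => by simp [LinearMap.mul'_apply, map_mul]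
  have hmulcomm' : ∀ x : A ⊗[k] A, LinearMap.mul' k Aq (g₂ x) = π (LinearMap.mul' k A x) :=
    fun x => congrArg (fun f => f x) hmulcomm
  have h6 : LinearMap.ker (LinearMap.mul' k Aq) = Submodule.map g₂ IA := by
    apply le_antisymm
    · intro y hy
      have hsurj : Function.Surjective g₂ := by
        rw [hg₂]
        exact TensorProduct.map_surjective hπ hπ
      obtain ⟨x, rfl⟩ := hsurj y
      have hπm : π (LinearMap.mul' k A x) = 0 := by
        rw [← hmulcomm' x]; exact hy
      refine ⟨x - (LinearMap.mul' k A x) ⊗ₜ[k] (1 : A), ?_, ?_⟩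
      · refine hIAmem' _ ?_
        simp [LinearMap.mul'_apply]
      · rw [map_sub, hg₂]
        simp [hπm]
    · rintro _ ⟨x, hx, rfl⟩
      rw [LinearMap.mem_ker, hmulcomm' x, hIAmem x hx, map_zero]
  have h7 : Function.Surjective (LinearMap.mul' k Aq) := fun y =>
    ⟨y ⊗ₜ[k] (1 : Aq), by simp [LinearMap.mul'_apply]⟩
  exact ⟨hKIA, fun j _ => hδIA j, h3, h4, h5, h6, h7⟩
end
end
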